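/- arXiv:1408.5817 — 2 statements merged into one kernel-verified Lean document; each statement's English description precedes it below -/
import Mathlib

section
/- For all n ≥ 1, all 0 ≤ k ≤ n−1, and every element q of a commutative ring, the sum of q^{maj((σ,S))} over all descent-starred permutations (σ,S) ∈ 𝔖^>_{n,k} equals [n−k]_q! · S_{n,n−k}(q). -/
open Finset

/-- One-line notation: `oneline σ i` is the value σ_i ∈ {1,…,n} at position i ∈ {1,…,n}. -/
def oneline {n : ℕ} (σ : Equiv.Perm (Fin n)) (i : ℕ) : ℕ :=
  if h : 1 ≤ i ∧ i ≤ n then (σ ⟨i - 1, by omega⟩ : ℕ) + 1 else 0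

/-- The descent set Des(σ) = {i ∈ {1,…,n−1} : σ_i > σ_{i+1}}. -/
def DesSet {n : ℕ} (σ : Equiv.Perm (Fin n)) : Finset ℕ :=
  (Finset.Icc 1 (n - 1)).filter fun i => oneline σ (i + 1) < oneline σ i

/-- The ascent set Asc(σ) = {i ∈ {1,…,n−1} : σ_i < σ_{i+1}}. -/
def AscSet {n : ℕ} (σ : Equiv.Perm (Fin n)) : Finset ℕ :=
  (Finset.Icc 1 (n - 1)).filter fun i => oneline σ i < oneline σ (i + 1)

/-- maj(σ) = Σ_{i ∈ Des(σ)} i. -/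
def majNum {n : ℕ} (σ : Equiv.Perm (Fin n)) : ℕ := ∑ i ∈ DesSet σ, i

/-- des(σ) = |Des(σ)|. -/
def desNum {n : ℕ} (σ : Equiv.Perm (Fin n)) : ℕ := (DesSet σ).card

/-- inv(σ) = #{(i,j) : 1 ≤ i < j ≤ n, σ_i > σ_j}. -/
def invNum {n : ℕ} (σ : Equiv.Perm (Fin n)) : ℕ :=
  ((Finset.Icc 1 n ×ˢ Finset.Icc 1 n).filter fun p =>
    p.1 < p.2 ∧ oneline σ p.2 < oneline σ p.1).card

/-- coinv(σ) = #{(i,j) : 1 ≤ i < j ≤ n, σ_i < σ_j}. -/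
def coinvNum {n : ℕ} (σ : Equiv.Perm (Fin n)) : ℕ :=
  ((Finset.Icc 1 n ×ˢ Finset.Icc 1 n).filter fun p =>
    p.1 < p.2 ∧ oneline σ p.1 < oneline σ p.2).card

/-- inv^{□,j}(σ) = #{i : 1 ≤ i < j, σ_i > σ_j}, inversions ending at position j. -/
def invEnd {n : ℕ} (σ : Equiv.Perm (Fin n)) (j : ℕ) : ℕ :=
  ((Finset.Icc 1 n).filter fun i => i < j ∧ oneline σ j < oneline σ i).card

/-- inv^{i,□}(σ) = #{j : i < j ≤ n, σ_i > σ_j}, inversions starting at position i. -/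
def invStart {n : ℕ} (σ : Equiv.Perm (Fin n)) (i : ℕ) : ℕ :=
  ((Finset.Icc 1 n).filter fun j => i < j ∧ oneline σ j < oneline σ i).card

/-- [m]_q = 1 + q + ⋯ + q^{m−1}. -/
def qnum {R : Type*} [CommRing R] (q : R) (m : ℕ) : R := ∑ i ∈ Finset.range m, q ^ i

/-- [m]_q! = [1]_q [2]_q ⋯ [m]_q, with [0]_q! = 1. -/
def qfact {R : Type*} [CommRing R] (q : R) (m : ℕ) : R := ∏ i ∈ Finset.range m, qnum q (i + 1)

/-- q-Stirling numbers: S_{0,0}(q)=1, S_{n,k}(q)=0 for k<0 or k>n, and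
S_{n+1,k}(q) = S_{n,k−1}(q) + [k]_q S_{n,k}(q). -/
def qStirling {R : Type*} [CommRing R] (q : R) : ℕ → ℕ → R
  | 0, 0 => 1
  | 0, _ + 1 => 0
  | _ + 1, 0 => 0
  | n + 1, k + 1 => qStirling q n k + qnum q (k + 1) * qStirling q n (k + 1)

/-- The set of star-sets of size k inside a given finite set (e.g. the descent set). -/
def starSets (D : Finset ℕ) (k : ℕ) : Finset (Finset ℕ) :=
  D.powerset.filter fun S => S.card = k

/-- inv((σ,S)) = inv(σ) − Σ_{i∈S} (1 + inv^{□,i}(σ)) for a descent-starred permutation. -/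
def starInv {n : ℕ} (σ : Equiv.Perm (Fin n)) (S : Finset ℕ) : ℕ :=
  invNum σ - ∑ i ∈ S, (1 + invEnd σ i)

/-- maj((σ,S)) = maj(σ) − Σ_{i∈S} |Des(σ) ∩ {i,…,n−1}| for a descent-starred permutation. -/
def starMaj {n : ℕ} (σ : Equiv.Perm (Fin n)) (S : Finset ℕ) : ℕ :=
  majNum σ - ∑ i ∈ S, (DesSet σ ∩ Finset.Icc i (n - 1)).card

/-- Gaussian binomial coefficients: binom_q(m,0)=1, binom_q(m,r)=0 for r>m, and
binom_q(m,r) = binom_q(m−1,r−1) + q^r · binom_q(m−1,r). -/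
def qbinom {R : Type*} [CommRing R] (q : R) : ℕ → ℕ → R
  | _, 0 => 1
  | 0, _ + 1 => 0
  | m + 1, r + 1 => qbinom q m r + q ^ (r + 1) * qbinom q m (r + 1)

/-- A_{n,j}(q) = Σ_{σ ∈ 𝔖_n, des(σ)=j} q^{maj(σ)}. -/
def eulerA {R : Type*} [CommRing R] (q : R) (n j : ℕ) : R :=
  ∑ σ ∈ (Finset.univ : Finset (Equiv.Perm (Fin n))).filter (fun σ => desNum σ = j),
    q ^ majNum σ

/-- [m]_{p,q} = p^{m−1} + p^{m−2} q + ⋯ + p q^{m−2} + q^{m−1}. -/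
def pqnum {R : Type*} [CommRing R] (p q : R) (m : ℕ) : R :=
  ∑ i ∈ Finset.range m, p ^ (m - 1 - i) * q ^ i

/-- [m]_{p,q}! = [1]_{p,q} [2]_{p,q} ⋯ [m]_{p,q}. -/
def pqfact {R : Type*} [CommRing R] (p q : R) (m : ℕ) : R :=
  ∏ i ∈ Finset.range m, pqnum p q (i + 1)

/-- p,q-Stirling numbers: S_{0,0}(p,q)=1, S_{n,k}(p,q)=0 for k<0 or k>n, and
S_{n+1,k}(p,q) = S_{n,k−1}(p,q) + [k]_{p,q} S_{n,k}(p,q). -/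
def pqStirling {R : Type*} [CommRing R] (p q : R) : ℕ → ℕ → R
  | 0, 0 => 1
  | 0, _ + 1 => 0
  | _ + 1, 0 => 0
  | n + 1, k + 1 => pqStirling p q n k + pqnum p q (k + 1) * pqStirling p q n (k + 1)


/-! ### Auxiliary development -/

theorem succAbove_val {n : ℕ} (j : Fin (n+1)) (m : Fin n) :
    ((j.succAbove m : Fin (n+1)) : ℕ) = if (m:ℕ) < (j:ℕ) then (m:ℕ) else (m:ℕ)+1 := by
  by_cases h : (m:ℕ) < (j:ℕ)
  · rw [Fin.succAbove_of_castSucc_lt j m (by simpa [Fin.lt_def] using h), if_pos h]; rfl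
  · rw [Fin.succAbove_of_le_castSucc j m (by simpa [Fin.le_def] using Nat.le_of_not_lt h),
      if_neg h]; rfl

def appendPerm {n : ℕ} (j : Fin (n+1)) (τ : Equiv.Perm (Fin n)) : Equiv.Perm (Fin (n+1)) :=
  finSuccEquivLast.trans ((Equiv.optionCongr τ).trans (finSuccEquiv' j).symm)

theorem appendPerm_castSucc {n : ℕ} (j : Fin (n+1)) (τ : Equiv.Perm (Fin n)) (i : Fin n) :
    appendPerm j τ (Fin.castSucc i) = j.succAbove (τ i) := by
  simp [appendPerm, finSuccEquivLast_castSucc, finSuccEquiv'_symm_some]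

theorem appendPerm_last {n : ℕ} (j : Fin (n+1)) (τ : Equiv.Perm (Fin n)) :
    appendPerm j τ (Fin.last n) = j := by
  simp [appendPerm, finSuccEquivLast_last, finSuccEquiv'_symm_none]

theorem appendPerm_bijective {n : ℕ} :
    Function.Bijective (fun p : Fin (n+1) × Equiv.Perm (Fin n) => appendPerm p.1 p.2) := by
  rw [Fintype.bijective_iff_injective_and_card]
  constructor
  · rintro ⟨j, τ⟩ ⟨j', τ'⟩ h
    simp only at h
    have hj : j = j' := by
      have := congrArg (fun σ : Equiv.Perm (Fin (n+1)) => σ (Fin.last n)) h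
      simpa [appendPerm_last] using this
    subst hj
    refine Prod.ext rfl ?_
    ext i
    have := congrArg (fun σ : Equiv.Perm (Fin (n+1)) => σ (Fin.castSucc i)) h
    simp only [appendPerm_castSucc] at this
    exact Fin.val_eq_of_eq (j.succAbove_right_injective this)
  · simp [Fintype.card_perm, Nat.factorial_succ]

/-- value bounds of oneline -/
theorem oneline_mem {n : ℕ} (τ : Equiv.Perm (Fin n)) {i : ℕ} (h1 : 1 ≤ i) (h2 : i ≤ n) :
    1 ≤ oneline τ i ∧ oneline τ i ≤ n := by
  rw [oneline, dif_pos ⟨h1, h2⟩]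
  have := (τ ⟨i - 1, by omega⟩).isLt
  omega

theorem oneline_appendPerm_mid {n : ℕ} (j : Fin (n+1)) (τ : Equiv.Perm (Fin n)) {i : ℕ}
    (h1 : 1 ≤ i) (h2 : i ≤ n) :
    oneline (appendPerm j τ) i =
      if oneline τ i ≤ (j:ℕ) then oneline τ i else oneline τ i + 1 := by
  have hi' : i ≤ n + 1 := by omega
  rw [oneline, dif_pos ⟨h1, hi'⟩, oneline, dif_pos ⟨h1, h2⟩]
  have hc : (⟨i - 1, by omega⟩ : Fin (n+1)) = Fin.castSucc ⟨i - 1, by omega⟩ := rfl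
  rw [hc, appendPerm_castSucc, succAbove_val]
  split <;> split <;> omega

theorem oneline_appendPerm_last {n : ℕ} (j : Fin (n+1)) (τ : Equiv.Perm (Fin n)) :
    oneline (appendPerm j τ) (n+1) = (j:ℕ) + 1 := by
  rw [oneline, dif_pos ⟨by omega, le_refl _⟩]
  have hc : (⟨n + 1 - 1, by omega⟩ : Fin (n+1)) = Fin.last n := rfl
  rw [hc, appendPerm_last]

theorem oneline_appendPerm_lt_iff {n : ℕ} (j : Fin (n+1)) (τ : Equiv.Perm (Fin n)) {a b : ℕ}
    (ha1 : 1 ≤ a) (ha2 : a ≤ n) (hb1 : 1 ≤ b) (hb2 : b ≤ n) :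
    (oneline (appendPerm j τ) a < oneline (appendPerm j τ) b ↔ oneline τ a < oneline τ b) := by
  rw [oneline_appendPerm_mid j τ ha1 ha2, oneline_appendPerm_mid j τ hb1 hb2]
  split <;> split <;> omega

theorem DesSet_subset {n : ℕ} (τ : Equiv.Perm (Fin n)) : DesSet τ ⊆ Finset.Icc 1 (n-1) :=
  Finset.filter_subset _ _

theorem mem_DesSet_iff {N : ℕ} (σ : Equiv.Perm (Fin N)) (d : ℕ) :
    d ∈ DesSet σ ↔ 1 ≤ d ∧ d ≤ N - 1 ∧ oneline σ (d+1) < oneline σ d := by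
  simp only [DesSet, Finset.mem_filter, Finset.mem_Icc]
  tauto

theorem DesSet_appendPerm {n : ℕ} (hn : 1 ≤ n) (j : Fin (n+1)) (τ : Equiv.Perm (Fin n)) :
    DesSet (appendPerm j τ) =
      if (j:ℕ) + 1 ≤ oneline τ n then insert n (DesSet τ) else DesSet τ := by
  have hlast := oneline_appendPerm_last j τ
  have hmid := oneline_appendPerm_mid j τ (le_refl 1 |>.trans hn) (le_refl n)
  have hnmem : n ∉ DesSet τ := by
    intro h
    have := Finset.mem_Icc.mp ((DesSet_subset τ) h)
    omega
  ext d
  by_cases hd : d = n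
  · subst hd
    rw [mem_DesSet_iff]
    have h1 : d + 1 = d + 1 := rfl
    rw [hlast, hmid]
    by_cases hcase : (j:ℕ) + 1 ≤ oneline τ d
    · rw [if_pos hcase]
      constructor
      · intro _; exact Finset.mem_insert_self _ _
      · intro _
        refine ⟨hn, by omega, ?_⟩
        split <;> omega
    · rw [if_neg hcase]
      constructor
      · intro ⟨_, _, hlt⟩
        exfalso; revert hlt
        split <;> omega
      · intro h
        exact absurd h hnmem
  · have heq : d ∈ DesSet (appendPerm j τ) ↔ d ∈ DesSet τ := by
      rw [mem_DesSet_iff, mem_DesSet_iff]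
      by_cases hrange : 1 ≤ d ∧ d ≤ n - 1
      · have hlt := oneline_appendPerm_lt_iff j τ (a := d + 1) (b := d)
          (by omega) (by omega) hrange.1 (by omega)
        rw [hlt]
        simp only [Nat.add_sub_cancel]
        constructor <;> rintro ⟨_, _, h⟩ <;> exact ⟨by omega, by omega, h⟩
      · simp only [Nat.add_sub_cancel]
        constructor <;> rintro ⟨h1, h2, _⟩ <;> exact absurd ⟨h1, by omega⟩ hrange
    rw [heq]
    split
    · simp [Finset.mem_insert, hd]
    · rfl

theorem n_notMem_DesSet {n : ℕ} (hn : 1 ≤ n) (τ : Equiv.Perm (Fin n)) : n ∉ DesSet τ := by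
  intro h
  have := Finset.mem_Icc.mp ((DesSet_subset τ) h)
  omega

theorem sum_card_swap {N : ℕ} (σ : Equiv.Perm (Fin N)) {S : Finset ℕ} (hS : S ⊆ DesSet σ) :
    ∑ i ∈ S, ((DesSet σ) ∩ Finset.Icc i (N-1)).card
      = ∑ d ∈ DesSet σ, (S ∩ Finset.Icc 1 d).card := by
  calc ∑ i ∈ S, ((DesSet σ) ∩ Finset.Icc i (N-1)).card
      = ∑ i ∈ S, ∑ d ∈ DesSet σ, if d ∈ Finset.Icc i (N-1) then 1 else 0 := by
        refine Finset.sum_congr rfl fun i _ => ?_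
        rw [← Finset.filter_mem_eq_inter, Finset.card_filter]
    _ = ∑ d ∈ DesSet σ, ∑ i ∈ S, if d ∈ Finset.Icc i (N-1) then 1 else 0 := Finset.sum_comm
    _ = ∑ d ∈ DesSet σ, (S ∩ Finset.Icc 1 d).card := by
        refine Finset.sum_congr rfl fun d hd => ?_
        rw [← Finset.filter_mem_eq_inter, Finset.card_filter]
        refine Finset.sum_congr rfl fun i hi => ?_
        have h1 := Finset.mem_Icc.mp (DesSet_subset σ hd)
        have h2 := Finset.mem_Icc.mp (DesSet_subset σ (hS hi))
        simp only [Finset.mem_Icc]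
        refine if_congr ?_ rfl rfl
        constructor <;> intro <;> omega

theorem sum_card_le {N : ℕ} (σ : Equiv.Perm (Fin N)) (S : Finset ℕ) :
    ∑ d ∈ DesSet σ, (S ∩ Finset.Icc 1 d).card ≤ majNum σ := by
  rw [majNum]
  refine Finset.sum_le_sum fun d _ => ?_
  calc (S ∩ Finset.Icc 1 d).card ≤ (Finset.Icc 1 d).card :=
        Finset.card_le_card Finset.inter_subset_right
    _ = d := by rw [Nat.card_Icc]; omega

theorem sum_starMaj_sub_le {N : ℕ} (σ : Equiv.Perm (Fin N)) {S : Finset ℕ}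
    (hS : S ⊆ DesSet σ) :
    ∑ i ∈ S, ((DesSet σ) ∩ Finset.Icc i (N-1)).card ≤ majNum σ := by
  rw [sum_card_swap σ hS]; exact sum_card_le σ S

/-- intersecting with a larger upper interval doesn't change things -/
theorem inter_Icc_eq {A : Finset ℕ} {m m' i : ℕ} (hA : A ⊆ Finset.Icc 1 m) (h : m ≤ m') :
    A ∩ Finset.Icc i m' = A ∩ Finset.Icc i m := by
  ext e
  simp only [Finset.mem_inter, Finset.mem_Icc, and_congr_right_iff]
  intro he
  have := Finset.mem_Icc.mp (hA he)
  omega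

theorem starMaj_append_no {n : ℕ} (σ : Equiv.Perm (Fin (n+1))) (τ : Equiv.Perm (Fin n))
    (hDes : DesSet σ = DesSet τ) {S : Finset ℕ} (hS : S ⊆ DesSet τ) :
    starMaj σ S = starMaj τ S := by
  have hmaj : majNum σ = majNum τ := by rw [majNum, majNum, hDes]
  rw [starMaj, starMaj, hmaj]
  congr 1
  refine Finset.sum_congr rfl fun i _ => ?_
  rw [hDes, Nat.add_sub_cancel, inter_Icc_eq (DesSet_subset τ) (Nat.sub_le n 1)]

theorem starMaj_append_yes {n k : ℕ} (hn : 1 ≤ n) (σ : Equiv.Perm (Fin (n+1)))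
    (τ : Equiv.Perm (Fin n)) (hDes : DesSet σ = insert n (DesSet τ))
    {S' : Finset ℕ} (hS' : S' ⊆ insert n (DesSet τ)) (hcard : S'.card = k) (hk : k ≤ n) :
    starMaj σ S' = starMaj τ (S'.erase n) + (n - k) := by
  have hnmem : n ∉ DesSet τ := n_notMem_DesSet hn τ
  have hmaj : majNum σ = n + majNum τ := by
    rw [majNum, majNum, hDes, Finset.sum_insert hnmem]
  have hsub : S'.erase n ⊆ DesSet τ := by
    intro x hx
    have h1 := Finset.mem_of_mem_erase hx
    have h2 := Finset.ne_of_mem_erase hx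
    rcases Finset.mem_insert.mp (hS' h1) with h | h
    · exact absurd h h2
    · exact h
  -- key sum computation
  have hin : ∀ i ∈ S', ((DesSet σ) ∩ Finset.Icc i ((n+1)-1)).card
      = 1 + ((DesSet τ) ∩ Finset.Icc i (n-1)).card := by
    intro i hi
    have hi' : 1 ≤ i ∧ i ≤ n := by
      rcases Finset.mem_insert.mp (hS' hi) with h | h
      · omega
      · have := Finset.mem_Icc.mp (DesSet_subset τ h); omega
    have hset : (DesSet σ) ∩ Finset.Icc i ((n+1)-1)
        = insert n ((DesSet τ) ∩ Finset.Icc i (n-1)) := by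
      rw [hDes]
      ext e
      simp only [Finset.mem_inter, Finset.mem_insert, Finset.mem_Icc, Nat.add_sub_cancel]
      constructor
      · rintro ⟨h1 | h1, h2⟩
        · exact Or.inl h1
        · have := Finset.mem_Icc.mp (DesSet_subset τ h1)
          exact Or.inr ⟨h1, by omega⟩
      · rintro (h1 | ⟨h1, h2⟩)
        · subst h1; exact ⟨Or.inl rfl, by omega⟩
        · exact ⟨Or.inr h1, by omega⟩
    rw [hset, Finset.card_insert_of_notMem (by
      intro hmem
      exact hnmem (Finset.mem_inter.mp hmem).1)]
    omega
  have hzero : ((DesSet τ) ∩ Finset.Icc n (n-1)).card = 0 := by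
    rw [Finset.Icc_eq_empty (by omega), Finset.inter_empty, Finset.card_empty]
  have hsum : ∑ i ∈ S', ((DesSet σ) ∩ Finset.Icc i ((n+1)-1)).card
      = k + ∑ i ∈ S'.erase n, ((DesSet τ) ∩ Finset.Icc i (n-1)).card := by
    rw [Finset.sum_congr rfl hin, Finset.sum_add_distrib]
    congr 1
    · rw [Finset.sum_const, hcard, smul_eq_mul, mul_one]
    · exact (Finset.sum_erase (f := fun i => ((DesSet τ) ∩ Finset.Icc i (n-1)).card) S' hzero).symm
  have hB := sum_starMaj_sub_le τ hsub
  rw [starMaj, starMaj, hmaj, hsum]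
  omega

theorem mem_starSets {D : Finset ℕ} {k : ℕ} {S : Finset ℕ} :
    S ∈ starSets D k ↔ S ⊆ D ∧ S.card = k := by
  simp [starSets, Finset.mem_filter, Finset.mem_powerset]

theorem starSets_zero (D : Finset ℕ) : starSets D 0 = {∅} := by
  ext S
  simp only [mem_starSets, Finset.mem_singleton, Finset.card_eq_zero]
  constructor
  · rintro ⟨_, h⟩; exact h
  · rintro rfl; exact ⟨Finset.empty_subset _, rfl⟩

theorem starSets_eq_empty {D : Finset ℕ} {k : ℕ} (h : D.card < k) : starSets D k = ∅ := by
  ext S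
  simp only [mem_starSets, Finset.notMem_empty, iff_false, not_and]
  intro hsub hcard
  have := Finset.card_le_card hsub
  omega

theorem starSets_insert {D : Finset ℕ} {n : ℕ} (hn : n ∉ D) (k : ℕ) :
    starSets (insert n D) (k+1)
      = starSets D (k+1) ∪ (starSets D k).image (insert n) := by
  ext S
  simp only [mem_starSets, Finset.mem_union, Finset.mem_image]
  constructor
  · rintro ⟨hsub, hcard⟩
    by_cases hmem : n ∈ S
    · right
      refine ⟨S.erase n, ⟨?_, ?_⟩, ?_⟩
      · intro x hx
        rcases Finset.mem_insert.mp (hsub (Finset.mem_of_mem_erase hx)) with h | h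
        · exact absurd h (Finset.ne_of_mem_erase hx)
        · exact h
      · rw [Finset.card_erase_of_mem hmem, hcard]
        omega
      · rw [Finset.insert_erase hmem]
    · left
      refine ⟨?_, hcard⟩
      intro x hx
      rcases Finset.mem_insert.mp (hsub hx) with h | h
      · exact absurd (h ▸ hx) hmem
      · exact h
  · rintro (⟨hsub, hcard⟩ | ⟨T, ⟨hsub, hcard⟩, rfl⟩)
    · exact ⟨hsub.trans (Finset.subset_insert _ _), hcard⟩
    · have hTn : n ∉ T := fun h => hn (hsub h)
      refine ⟨Finset.insert_subset_insert _ hsub, ?_⟩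
      rw [Finset.card_insert_of_notMem hTn, hcard]

theorem card_DesSet_le {N : ℕ} (τ : Equiv.Perm (Fin N)) : (DesSet τ).card ≤ N - 1 := by
  calc (DesSet τ).card ≤ (Finset.Icc 1 (N-1)).card := Finset.card_le_card (DesSet_subset τ)
    _ = N - 1 := by rw [Nat.card_Icc]; omega

/-- The inner generating function. -/
def Phi {R : Type*} [CommRing R] (q : R) (k : ℕ) {N : ℕ} (σ : Equiv.Perm (Fin N)) : R :=
  ∑ S ∈ starSets (DesSet σ) k, q ^ starMaj σ S

/-- `Phi` with star count shifted down by one. -/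
def Phim {R : Type*} [CommRing R] (q : R) (k : ℕ) {N : ℕ} (σ : Equiv.Perm (Fin N)) : R :=
  match k with
  | 0 => 0
  | k' + 1 => Phi q k' σ

theorem Phi_appendPerm {R : Type*} [CommRing R] (q : R) (k : ℕ) {n : ℕ} (hn : 1 ≤ n)
    (j : Fin (n+1)) (τ : Equiv.Perm (Fin n)) :
    Phi q k (appendPerm j τ)
      = if (j:ℕ) + 1 ≤ oneline τ n
        then q^(n-k) * (Phi q k τ + Phim q k τ)
        else Phi q k τ := by
  have hnmem : n ∉ DesSet τ := n_notMem_DesSet hn τ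
  have hDes := DesSet_appendPerm hn j τ
  by_cases hc : (j:ℕ) + 1 ≤ oneline τ n
  · rw [if_pos hc] at hDes ⊢
    by_cases hk : k ≤ n
    · -- main case
      have hstar : ∀ S' ∈ starSets (DesSet (appendPerm j τ)) k,
          starMaj (appendPerm j τ) S' = starMaj τ (S'.erase n) + (n - k) := by
        intro S' hS'
        rw [hDes] at hS'
        obtain ⟨hsub, hcard⟩ := mem_starSets.mp hS'
        exact starMaj_append_yes hn _ τ hDes hsub hcard hk
      simp only [Phi]
      rw [Finset.sum_congr rfl fun S hS => by rw [hstar S hS]]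
      have hpow : ∀ S : Finset ℕ, q ^ (starMaj τ (S.erase n) + (n - k))
          = q ^ (n-k) * q ^ (starMaj τ (S.erase n)) := fun S => by rw [pow_add, mul_comm]
      rw [Finset.sum_congr rfl fun S _ => hpow S, ← Finset.mul_sum]
      congr 1
      cases k with
      | zero =>
        rw [hDes, starSets_zero, Finset.sum_singleton, Finset.erase_empty]
        simp [Phi, Phim, starSets_zero]
      | succ k' =>
        show _ = Phi q (k'+1) τ + Phi q k' τ
        rw [hDes, starSets_insert hnmem k']
        rw [Finset.sum_union]
        · congr 1
          · refine Finset.sum_congr rfl fun S hS => ?_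
            obtain ⟨hsub, _⟩ := mem_starSets.mp hS
            rw [Finset.erase_eq_of_notMem (fun h => hnmem (hsub h))]
          · rw [Finset.sum_image]
            · refine Finset.sum_congr rfl fun S hS => ?_
              obtain ⟨hsub, _⟩ := mem_starSets.mp hS
              rw [Finset.erase_insert (fun h => hnmem (hsub h))]
            · intro S1 h1 S2 h2 heq
              obtain ⟨hsub1, _⟩ := mem_starSets.mp h1
              obtain ⟨hsub2, _⟩ := mem_starSets.mp h2
              have e1 : (insert n S1).erase n = S1 :=
                Finset.erase_insert (fun h => hnmem (hsub1 h))
              have e2 : (insert n S2).erase n = S2 :=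
                Finset.erase_insert (fun h => hnmem (hsub2 h))
              rw [← e1, ← e2, heq]
        · rw [Finset.disjoint_left]
          intro S hS1 hS2
          obtain ⟨hsub, _⟩ := mem_starSets.mp hS1
          obtain ⟨T, hT, rfl⟩ := Finset.mem_image.mp hS2
          exact hnmem (hsub (Finset.mem_insert_self n T))
    · -- degenerate case k > n : everything is 0
      have h1 : starSets (DesSet (appendPerm j τ)) k = ∅ := by
        refine starSets_eq_empty ?_
        rw [hDes, Finset.card_insert_of_notMem hnmem]
        have := card_DesSet_le τ
        omega
      have h2 : starSets (DesSet τ) k = ∅ := by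
        refine starSets_eq_empty ?_
        have := card_DesSet_le τ
        omega
      simp only [Phi]
      rw [h1, h2, Finset.sum_empty, Finset.sum_empty]
      cases k with
      | zero => omega
      | succ k' =>
        have h3 : starSets (DesSet τ) k' = ∅ := by
          refine starSets_eq_empty ?_
          have := card_DesSet_le τ
          omega
        simp only [Phi, Phim]
        rw [h3, Finset.sum_empty, add_zero, mul_zero]
  · rw [if_neg hc] at hDes ⊢
    simp only [Phi]
    rw [hDes]
    refine Finset.sum_congr rfl fun S hS => ?_
    obtain ⟨hsub, _⟩ := mem_starSets.mp hS
    rw [starMaj_append_no _ τ hDes hsub]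

/-- Sum of `Phi` over permutations with last letter `v`. -/
def gfun {R : Type*} [CommRing R] (q : R) (n k v : ℕ) : R :=
  ∑ σ ∈ Finset.univ.filter (fun σ : Equiv.Perm (Fin n) => oneline σ n = v), Phi q k σ

/-- `gfun` with star count shifted down by one. -/
def gmfun {R : Type*} [CommRing R] (q : R) (n k v : ℕ) : R :=
  ∑ σ ∈ Finset.univ.filter (fun σ : Equiv.Perm (Fin n) => oneline σ n = v), Phim q k σ

theorem gmfun_zero {R : Type*} [CommRing R] (q : R) (n v : ℕ) : gmfun q n 0 v = 0 := by
  simp [gmfun, Phim]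

theorem gmfun_succ {R : Type*} [CommRing R] (q : R) (n k v : ℕ) :
    gmfun q n (k+1) v = gfun q n k v := rfl

/-- Sum of `Phi` over all permutations. -/
def Hfun {R : Type*} [CommRing R] (q : R) (n k : ℕ) : R :=
  ∑ σ : Equiv.Perm (Fin n), Phi q k σ

def Hmfun {R : Type*} [CommRing R] (q : R) (n k : ℕ) : R :=
  match k with
  | 0 => 0
  | k' + 1 => Hfun q n k'

theorem Hfun_split {R : Type*} [CommRing R] (q : R) {n : ℕ} (hn : 1 ≤ n) (k : ℕ) :
    Hfun q n k = ∑ v ∈ Finset.Icc 1 n, gfun q n k v := by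
  rw [Hfun]
  simp only [gfun]
  exact (Finset.sum_fiberwise_of_maps_to
    (fun σ _ => Finset.mem_Icc.mpr (oneline_mem σ hn (le_refl n)))
    (fun σ => Phi q k σ)).symm

theorem Hmfun_split {R : Type*} [CommRing R] (q : R) {n : ℕ} (hn : 1 ≤ n) (k : ℕ) :
    Hmfun q n k = ∑ v ∈ Finset.Icc 1 n, gmfun q n k v := by
  cases k with
  | zero => simp [Hmfun, gmfun_zero]
  | succ k' =>
    show Hfun q n k' = _
    rw [Finset.sum_congr rfl fun v _ => gmfun_succ q n k' v]
    exact Hfun_split q hn k'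

theorem gA {R : Type*} [CommRing R] (q : R) {n : ℕ} (hn : 1 ≤ n) (k : ℕ) {v : ℕ}
    (hv1 : 1 ≤ v) (hv2 : v ≤ n + 1) :
    gfun q (n+1) k v = (∑ w ∈ Finset.Icc 1 (v-1), gfun q n k w)
      + q^(n-k) * ((∑ w ∈ Finset.Icc v n, gfun q n k w)
        + (∑ w ∈ Finset.Icc v n, gmfun q n k w)) := by
  have hv' : v - 1 < n + 1 := by omega
  set jv : Fin (n+1) := ⟨v - 1, hv'⟩ with hjv
  have hjval : (jv : ℕ) + 1 = v := by simp [hjv]; omega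
  -- Step 1: reindex by appendPerm
  have step1 : gfun q (n+1) k v = ∑ τ : Equiv.Perm (Fin n), Phi q k (appendPerm jv τ) := by
    rw [gfun, Finset.sum_filter]
    rw [← Fintype.sum_bijective _ appendPerm_bijective _
      (fun σ => if oneline σ (n+1) = v then Phi q k σ else 0) (fun p => rfl)]
    rw [Fintype.sum_prod_type]
    rw [Finset.sum_eq_single jv]
    · refine Finset.sum_congr rfl fun τ _ => ?_
      simp only [oneline_appendPerm_last]
      rw [if_pos hjval]
    · intro j _ hj
      have hne : ¬ ((j:ℕ) + 1 = v) := by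
        intro h
        exact hj (Fin.ext (by simp [hjv]; omega))
      refine Finset.sum_eq_zero fun τ _ => ?_
      simp only [oneline_appendPerm_last]
      rw [if_neg hne]
    · intro h
      exact absurd (Finset.mem_univ jv) h
  -- Step 2: apply Phi_appendPerm
  have step2 : ∀ τ : Equiv.Perm (Fin n), Phi q k (appendPerm jv τ)
      = if v ≤ oneline τ n then q^(n-k) * (Phi q k τ + Phim q k τ) else Phi q k τ := by
    intro τ
    rw [Phi_appendPerm q k hn jv τ, hjval]
  rw [step1, Finset.sum_congr rfl fun τ _ => step2 τ]
  -- Step 3: fiber by last letter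
  rw [← Finset.sum_fiberwise_of_maps_to
    (fun (σ : Equiv.Perm (Fin n)) (_ : σ ∈ Finset.univ) =>
      Finset.mem_Icc.mpr (oneline_mem σ hn (le_refl n)))
    (fun τ => if v ≤ oneline τ n then q^(n-k) * (Phi q k τ + Phim q k τ) else Phi q k τ)]
  have step3 : ∀ w ∈ Finset.Icc 1 n,
      (∑ τ ∈ Finset.univ.filter (fun τ : Equiv.Perm (Fin n) => oneline τ n = w),
        if v ≤ oneline τ n then q^(n-k) * (Phi q k τ + Phim q k τ) else Phi q k τ)
      = if v ≤ w then q^(n-k) * (gfun q n k w + gmfun q n k w) else gfun q n k w := by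
    intro w _
    have hcong : ∀ τ ∈ Finset.univ.filter
        (fun τ : Equiv.Perm (Fin n) => oneline τ n = w),
        (if v ≤ oneline τ n then q^(n-k) * (Phi q k τ + Phim q k τ) else Phi q k τ)
        = (if v ≤ w then q^(n-k) * (Phi q k τ + Phim q k τ) else Phi q k τ) := by
      intro τ hτ
      rw [(Finset.mem_filter.mp hτ).2]
    rw [Finset.sum_congr rfl hcong]
    by_cases hw : v ≤ w
    · rw [if_pos hw, Finset.sum_congr rfl (fun τ _ => if_pos hw), ← Finset.mul_sum,
        Finset.sum_add_distrib]
      rfl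
    · rw [if_neg hw, Finset.sum_congr rfl (fun τ _ => if_neg hw)]
      rfl
  rw [Finset.sum_congr rfl step3, Finset.sum_ite]
  have e1 : (Finset.Icc 1 n).filter (fun w => v ≤ w) = Finset.Icc v n := by
    ext w
    simp only [Finset.mem_filter, Finset.mem_Icc]
    omega
  have e2 : (Finset.Icc 1 n).filter (fun w => ¬ v ≤ w) = Finset.Icc 1 (v-1) := by
    ext w
    simp only [Finset.mem_filter, Finset.mem_Icc]
    omega
  rw [e1, e2, ← Finset.mul_sum, Finset.sum_add_distrib, add_comm]

/-! ### Interval sum helpers -/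

theorem sum_Icc_top {M : Type*} [AddCommMonoid M] {v : ℕ} (hv : 1 ≤ v) (f : ℕ → M) :
    ∑ j ∈ Finset.Icc 1 v, f j = (∑ j ∈ Finset.Icc 1 (v-1), f j) + f v := by
  obtain ⟨v', rfl⟩ : ∃ v', v = v' + 1 := ⟨v - 1, by omega⟩
  rw [Finset.sum_Icc_succ_top (by omega), Nat.add_sub_cancel]

theorem sum_Icc_bot {M : Type*} [AddCommMonoid M] {v N : ℕ} (hv : v ≤ N) (f : ℕ → M) :
    ∑ j ∈ Finset.Icc v N, f j = f v + ∑ j ∈ Finset.Icc (v+1) N, f j := by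
  rw [Finset.Icc_add_one_left_eq_Ioc, ← Finset.Ioc_insert_left hv, Finset.sum_insert (by simp)]

theorem sum_Icc_shift {M : Type*} [AddCommMonoid M] (l u : ℕ) (f : ℕ → M) :
    ∑ j ∈ Finset.Icc l u, f (j+1) = ∑ j ∈ Finset.Icc (l+1) (u+1), f j := by
  rw [← Finset.map_add_right_Icc, Finset.sum_map]
  rfl

/-! ### Base case values -/

theorem Phi_one {R : Type*} [CommRing R] (q : R) (k : ℕ) (σ : Equiv.Perm (Fin 1)) :
    Phi q k σ = if k = 0 then 1 else 0 := by
  have hD : DesSet σ = ∅ := by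
    rw [DesSet]
    have : Finset.Icc 1 (1-1) = ∅ := by rw [Finset.Icc_eq_empty] <;> omega
    rw [this, Finset.filter_empty]
  cases k with
  | zero =>
    rw [Phi, hD, starSets_zero, Finset.sum_singleton, if_pos rfl]
    have : starMaj σ ∅ = 0 := by
      rw [starMaj, Finset.sum_empty, majNum, hD, Finset.sum_empty]
      omega
    rw [this, pow_zero]
  | succ k' =>
    rw [Phi, hD, starSets_eq_empty (by simp), Finset.sum_empty, if_neg (by omega)]

theorem oneline_one (σ : Equiv.Perm (Fin 1)) : oneline σ 1 = 1 := by
  rw [oneline, dif_pos ⟨le_refl 1, le_refl 1⟩]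
  have : σ ⟨0, by omega⟩ = ⟨0, by omega⟩ := Subsingleton.elim _ _
  rw [this]

theorem gfun_one {R : Type*} [CommRing R] (q : R) (k v : ℕ) :
    gfun q 1 k v = if v = 1 ∧ k = 0 then 1 else 0 := by
  rw [gfun]
  by_cases hv : v = 1
  · subst hv
    have : (Finset.univ.filter (fun σ : Equiv.Perm (Fin 1) => oneline σ 1 = 1))
        = Finset.univ := by
      refine Finset.filter_true_of_mem fun σ _ => oneline_one σ
    rw [this]
    rw [Fintype.sum_subsingleton _ 1, Phi_one]
    cases k <;> simp
  · have : (Finset.univ.filter (fun σ : Equiv.Perm (Fin 1) => oneline σ 1 = v))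
        = ∅ := by
      refine Finset.filter_false_of_mem fun σ _ => by rw [oneline_one]; omega
    rw [this, Finset.sum_empty, if_neg (by tauto)]

theorem gmfun_one {R : Type*} [CommRing R] (q : R) (k v : ℕ) :
    gmfun q 1 k v = if v = 1 ∧ k = 1 then 1 else 0 := by
  cases k with
  | zero => rw [gmfun_zero, if_neg (by omega)]
  | succ k' =>
    rw [gmfun_succ, gfun_one]
    by_cases h : v = 1 ∧ k' = 0
    · rw [if_pos h, if_pos ⟨h.1, by omega⟩]
    · rw [if_neg h, if_neg (by omega)]

theorem Hfun_one {R : Type*} [CommRing R] (q : R) (k : ℕ) :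
    Hfun q 1 k = if k = 0 then 1 else 0 := by
  rw [Hfun, Fintype.sum_subsingleton _ 1, Phi_one]

theorem Hfun_zero {R : Type*} [CommRing R] (q : R) {n k : ℕ} (hn : 1 ≤ n) (hk : n ≤ k) :
    Hfun q n k = 0 := by
  rw [Hfun]
  refine Finset.sum_eq_zero fun σ _ => ?_
  rw [Phi, starSets_eq_empty (by
    have := card_DesSet_le σ
    omega), Finset.sum_empty]

theorem Hmfun_zero {R : Type*} [CommRing R] (q : R) {n k : ℕ} (hn : 1 ≤ n) (hk : n + 1 ≤ k) :
    Hmfun q n k = 0 := by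
  cases k with
  | zero => rfl
  | succ k' => exact Hfun_zero q hn (by omega)

theorem sum_Icc_top' {M : Type*} [AddCommMonoid M] {l u : ℕ} (h1 : 1 ≤ u) (h2 : l ≤ u)
    (f : ℕ → M) :
    ∑ j ∈ Finset.Icc l u, f j = (∑ j ∈ Finset.Icc l (u-1), f j) + f u := by
  obtain ⟨u', rfl⟩ : ∃ u', u = u' + 1 := ⟨u - 1, by omega⟩
  rw [Finset.sum_Icc_succ_top (by omega), Nat.add_sub_cancel]

/-- The core telescoping computation for the recursion (B). -/
theorem coreB {R : Type*} [CommRing R] (q p : R) (a b c e : ℕ → R) {N v : ℕ}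
    (hN : 2 ≤ N) (hv1 : 1 ≤ v) (hv2 : v ≤ N)
    (IHa : ∀ j, 1 ≤ j → j ≤ N - 1 → a j = q * a (j+1) + c j)
    (IHb : ∀ j, 1 ≤ j → j ≤ N - 1 → b j = q * b (j+1) + e j)
    (hC : q * a 1 = p * (a N + b N)) :
    (∑ j ∈ Finset.Icc 1 (v-1), a j)
      + p * ((∑ j ∈ Finset.Icc v N, a j) + (∑ j ∈ Finset.Icc v N, b j))
    = q * ((∑ j ∈ Finset.Icc 1 v, a j)
        + p * ((∑ j ∈ Finset.Icc (v+1) N, a j) + (∑ j ∈ Finset.Icc (v+1) N, b j)))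
      + ((∑ j ∈ Finset.Icc 1 (v-1), c j)
        + p * ((∑ j ∈ Finset.Icc v (N-1), c j) + (∑ j ∈ Finset.Icc v (N-1), e j))) := by
  have hv' : v - 1 + 1 = v := by omega
  -- closed forms
  have eq1 : ∑ j ∈ Finset.Icc 1 v, a j = (∑ j ∈ Finset.Icc 1 (v-1), a j) + a v :=
    sum_Icc_top hv1 a
  have eq2 : ∑ j ∈ Finset.Icc 2 v, a j
      = (∑ j ∈ Finset.Icc 1 (v-1), a j) + a v - a 1 := by
    have := sum_Icc_bot hv1 a
    rw [eq1] at this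
    linear_combination -this
  have eq3 : ∑ j ∈ Finset.Icc v N, a j = a v + ∑ j ∈ Finset.Icc (v+1) N, a j :=
    sum_Icc_bot hv2 a
  have eq3b : ∑ j ∈ Finset.Icc v N, b j = b v + ∑ j ∈ Finset.Icc (v+1) N, b j :=
    sum_Icc_bot hv2 b
  have eq4 : ∑ j ∈ Finset.Icc v (N-1), a j
      = a v + (∑ j ∈ Finset.Icc (v+1) N, a j) - a N := by
    have h := sum_Icc_top' (l := v) (by omega) hv2 a
    rw [eq3] at h
    linear_combination -h
  have eq4b : ∑ j ∈ Finset.Icc v (N-1), b j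
      = b v + (∑ j ∈ Finset.Icc (v+1) N, b j) - b N := by
    have h := sum_Icc_top' (l := v) (by omega) hv2 b
    rw [eq3b] at h
    linear_combination -h
  -- telescoped c/e sums
  have hc1 : ∑ j ∈ Finset.Icc 1 (v-1), c j
      = (∑ j ∈ Finset.Icc 1 (v-1), a j) - q * (∑ j ∈ Finset.Icc 2 v, a j) := by
    have hstep : ∀ j ∈ Finset.Icc 1 (v-1), c j = a j - q * a (j+1) := by
      intro j hj
      have hj' := Finset.mem_Icc.mp hj
      have := IHa j hj'.1 (by omega)
      linear_combination -this
    rw [Finset.sum_congr rfl hstep, Finset.sum_sub_distrib, ← Finset.mul_sum,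
      sum_Icc_shift, hv']
  have hc2 : ∑ j ∈ Finset.Icc v (N-1), c j
      = (∑ j ∈ Finset.Icc v (N-1), a j) - q * (∑ j ∈ Finset.Icc (v+1) N, a j) := by
    have hstep : ∀ j ∈ Finset.Icc v (N-1), c j = a j - q * a (j+1) := by
      intro j hj
      have hj' := Finset.mem_Icc.mp hj
      have := IHa j (by omega) (by omega)
      linear_combination -this
    have hN' : N - 1 + 1 = N := by omega
    rw [Finset.sum_congr rfl hstep, Finset.sum_sub_distrib, ← Finset.mul_sum,
      sum_Icc_shift, hN']
  have hc2b : ∑ j ∈ Finset.Icc v (N-1), e j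
      = (∑ j ∈ Finset.Icc v (N-1), b j) - q * (∑ j ∈ Finset.Icc (v+1) N, b j) := by
    have hstep : ∀ j ∈ Finset.Icc v (N-1), e j = b j - q * b (j+1) := by
      intro j hj
      have hj' := Finset.mem_Icc.mp hj
      have := IHb j (by omega) (by omega)
      linear_combination -this
    have hN' : N - 1 + 1 = N := by omega
    rw [Finset.sum_congr rfl hstep, Finset.sum_sub_distrib, ← Finset.mul_sum,
      sum_Icc_shift, hN']
  rw [hc1, hc2, hc2b, eq1, eq2, eq3, eq3b, eq4, eq4b]
  linear_combination -hC

/-- `gfun` with star count shifted down twice. -/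
def gm2fun {R : Type*} [CommRing R] (q : R) (n k v : ℕ) : R :=
  match k with
  | 0 => 0
  | k' + 1 => gmfun q n k' v

theorem gm2fun_succ {R : Type*} [CommRing R] (q : R) (n k v : ℕ) :
    gm2fun q n (k+1) v = gmfun q n k v := rfl

/-- recursion (A) for the shifted function -/
theorem gAm {R : Type*} [CommRing R] (q : R) {n : ℕ} (hn : 1 ≤ n) (k : ℕ) {v : ℕ}
    (hv1 : 1 ≤ v) (hv2 : v ≤ n + 1) :
    gmfun q (n+1) k v = (∑ w ∈ Finset.Icc 1 (v-1), gmfun q n k w)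
      + q^(n+1-k) * ((∑ w ∈ Finset.Icc v n, gmfun q n k w)
        + (∑ w ∈ Finset.Icc v n, gm2fun q n k w)) := by
  cases k with
  | zero =>
    simp [gmfun_zero, gm2fun]
  | succ k' =>
    rw [gmfun_succ, gA q hn k' hv1 hv2]
    have he : n - k' = n + 1 - (k'+1) := by omega
    rw [he]
    rfl

theorem gfun_top {R : Type*} [CommRing R] (q : R) {n : ℕ} (hn : 1 ≤ n) (k : ℕ) :
    gfun q (n+1) k (n+1) = Hfun q n k := by
  rw [gA q hn k (by omega) (le_refl _), Finset.Icc_eq_empty (a := n+1) (by omega),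
    Finset.sum_empty, Finset.sum_empty, Nat.add_sub_cancel, ← Hfun_split q hn k]
  ring

theorem gmfun_top {R : Type*} [CommRing R] (q : R) {n : ℕ} (hn : 1 ≤ n) (k : ℕ) :
    gmfun q (n+1) k (n+1) = Hmfun q n k := by
  cases k with
  | zero => simp [gmfun_zero, Hmfun]
  | succ k' => rw [gmfun_succ, gfun_top q hn k']; rfl

theorem gfun_bot {R : Type*} [CommRing R] (q : R) {n : ℕ} (hn : 1 ≤ n) (k : ℕ) :
    gfun q (n+1) k 1 = q^(n-k) * (Hfun q n k + Hmfun q n k) := by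
  rw [gA q hn k (le_refl 1) (by omega), show (1:ℕ) - 1 = 0 from rfl,
    Finset.Icc_eq_empty (a := 1) (b := 0) (by omega), Finset.sum_empty, zero_add,
    ← Hfun_split q hn k, ← Hmfun_split q hn k]

/-- side condition (C) -/
theorem gC {R : Type*} [CommRing R] (q : R) {n : ℕ} (hn : 2 ≤ n) (k : ℕ) :
    q * gfun q n k 1 = q^(n-k) * (gfun q n k n + gmfun q n k n) := by
  obtain ⟨m, rfl⟩ : ∃ m, n = m + 1 := ⟨n - 1, by omega⟩
  have hm : 1 ≤ m := by omega
  rw [gfun_bot q hm k, gfun_top q hm k, gmfun_top q hm k]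
  by_cases hk : k ≤ m
  · have he : m + 1 - k = (m - k) + 1 := by omega
    rw [he, pow_succ]
    ring
  · rw [Hfun_zero q hm (by omega), Hmfun_zero q hm (by omega)]
    ring

/-- recursion (B) -/
theorem gB {R : Type*} [CommRing R] (q : R) :
    ∀ (m k v : ℕ), 1 ≤ v → v ≤ m + 1 →
      gfun q (m+2) k v = q * gfun q (m+2) k (v+1) + gmfun q (m+1) k v := by
  intro m
  induction m with
  | zero =>
    intro k v hv1 hv2
    have hv : v = 1 := by omega
    subst hv
    have g21 : gfun q 2 k 1 = q^(1-k) * (gfun q 1 k 1 + gmfun q 1 k 1) := by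
      rw [gfun_bot q (le_refl 1) k, Hfun_split q (le_refl 1) k,
        Hmfun_split q (le_refl 1) k, Finset.Icc_self, Finset.sum_singleton,
        Finset.sum_singleton]
    have g22 : gfun q 2 k 2 = gfun q 1 k 1 := by
      rw [gfun_top q (le_refl 1) k, Hfun_split q (le_refl 1) k, Finset.Icc_self,
        Finset.sum_singleton]
    rw [g21, g22, gfun_one, gmfun_one]
    rcases k with _ | _ | k <;> simp
  | succ m IH =>
    intro k v hv1 hv2
    have hN : 1 ≤ m + 2 := by omega
    have hN1 : 1 ≤ m + 1 := by omega
    have IHa : ∀ j, 1 ≤ j → j ≤ (m+2) - 1 →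
        gfun q (m+2) k j = q * gfun q (m+2) k (j+1) + gmfun q (m+1) k j :=
      fun j h1 h2 => IH k j h1 (by omega)
    have IHb : ∀ j, 1 ≤ j → j ≤ (m+2) - 1 →
        gmfun q (m+2) k j = q * gmfun q (m+2) k (j+1) + gm2fun q (m+1) k j := by
      intro j h1 h2
      cases k with
      | zero => simp [gmfun_zero, gm2fun]
      | succ k' =>
        rw [gmfun_succ, gmfun_succ, gm2fun_succ]
        exact IH k' j h1 (by omega)
    have hC := gC q (n := m + 2) (by omega) k
    -- expand everything
    rw [show m + 1 + 1 = m + 2 from rfl] at hv2 ⊢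
    rw [gA q (by omega : 1 ≤ m + 2) k hv1 (by omega),
      gA q (by omega : 1 ≤ m + 2) k (v := v + 1) (by omega) (by omega),
      gAm q (n := m + 1) hN1 k hv1 (by omega)]
    simp only [Nat.add_sub_cancel, show m + 1 + 1 = m + 2 from rfl,
      show m + 2 - 1 = m + 1 from rfl]
    exact coreB q (q^(m+2-k)) (gfun q (m+2) k) (gmfun q (m+2) k)
      (gmfun q (m+1) k) (gm2fun q (m+1) k) (by omega) hv1 hv2
      (by simpa using IHa) (by simpa using IHb) hC

/-- recursion (B), general form -/
theorem gB' {R : Type*} [CommRing R] (q : R) {N : ℕ} (hN : 2 ≤ N) (k : ℕ) {v : ℕ}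
    (hv1 : 1 ≤ v) (hv2 : v ≤ N - 1) :
    gfun q N k v = q * gfun q N k (v+1) + gmfun q (N-1) k v := by
  obtain ⟨m, rfl⟩ : ∃ m, N = m + 2 := ⟨N - 2, by omega⟩
  have := gB q m k v hv1 (by omega)
  simpa using this

/-- the main recursion, with the factor (1-q). -/
theorem keyM {R : Type*} [CommRing R] (q : R) {n : ℕ} (hn : 1 ≤ n) (k : ℕ) :
    (1 - q) * Hfun q (n+1) k = (1 - q^(n+1-k)) * (Hfun q n k + Hmfun q n k) := by
  by_cases hk : k ≤ n
  · have hsum : ∑ v ∈ Finset.Icc 1 n, gfun q (n+1) k v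
        = q * (∑ v ∈ Finset.Icc 1 n, gfun q (n+1) k (v+1))
          + ∑ v ∈ Finset.Icc 1 n, gmfun q n k v := by
      rw [Finset.mul_sum, ← Finset.sum_add_distrib]
      refine Finset.sum_congr rfl fun v hv => ?_
      have hv' := Finset.mem_Icc.mp hv
      have := gB' q (N := n + 1) (by omega) k hv'.1 (by simpa using hv'.2)
      simpa using this
    have h1 : ∑ v ∈ Finset.Icc 1 n, gfun q (n+1) k v
        = Hfun q (n+1) k - gfun q (n+1) k (n+1) := by
      have := sum_Icc_top (v := n+1) (by omega) (gfun q (n+1) k)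
      rw [← Hfun_split q (by omega) k] at this
      simp only [Nat.add_sub_cancel] at this
      linear_combination -this
    have h2 : ∑ v ∈ Finset.Icc 1 n, gfun q (n+1) k (v+1)
        = Hfun q (n+1) k - gfun q (n+1) k 1 := by
      rw [sum_Icc_shift]
      have := sum_Icc_bot (v := 1) (N := n+1) (by omega) (gfun q (n+1) k)
      rw [← Hfun_split q (by omega) k] at this
      linear_combination -this
    rw [h1, h2, ← Hmfun_split q hn k, gfun_top q hn k, gfun_bot q hn k] at hsum
    have he : n + 1 - k = (n - k) + 1 := by omega
    rw [he, pow_succ]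
    linear_combination hsum
  · rw [Hfun_zero q hn (by omega), Hmfun_zero q hn (by omega),
      Hfun_zero q (by omega : 1 ≤ n + 1) (by omega : n + 1 ≤ k)]
    ring

theorem one_sub_mul_qnum {R : Type*} [CommRing R] (q : R) (m : ℕ) :
    (1 - q) * qnum q m = 1 - q ^ m := by
  rw [qnum]
  linear_combination -geom_sum_mul q m

theorem qStirling_of_lt {R : Type*} [CommRing R] (q : R) :
    ∀ {n k : ℕ}, n < k → qStirling q n k = 0 := by
  intro n
  induction n with
  | zero =>
    intro k hk
    obtain ⟨k', rfl⟩ : ∃ k', k = k' + 1 := ⟨k - 1, by omega⟩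
    rfl
  | succ n IH =>
    intro k hk
    obtain ⟨k', rfl⟩ : ∃ k', k = k' + 1 := ⟨k - 1, by omega⟩
    show qStirling q n k' + qnum q (k' + 1) * qStirling q n (k' + 1) = 0
    rw [IH (by omega), IH (by omega), mul_zero, add_zero]

theorem Hrec {n : ℕ} (hn : 1 ≤ n) (k : ℕ) :
    Hfun (Polynomial.X : Polynomial ℤ) (n+1) k
      = qnum Polynomial.X (n+1-k)
        * (Hfun Polynomial.X n k + Hmfun Polynomial.X n k) := by
  have h1k : (1 - Polynomial.X : Polynomial ℤ) ≠ 0 := by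
    intro h
    have := congrArg (fun p : Polynomial ℤ => p.coeff 1) h
    simp [Polynomial.coeff_one] at this
  apply mul_left_cancel₀ h1k
  rw [keyM Polynomial.X hn k, ← mul_assoc, one_sub_mul_qnum]

theorem HStir : ∀ (m k : ℕ),
    Hfun (Polynomial.X : Polynomial ℤ) (m+1) k
      = qfact Polynomial.X (m+1-k) * qStirling Polynomial.X (m+1) (m+1-k) := by
  intro m
  induction m with
  | zero =>
    intro k
    rw [Hfun_one]
    cases k with
    | zero =>
      rw [if_pos rfl]
      show (1 : Polynomial ℤ) = qfact Polynomial.X 1 * qStirling Polynomial.X 1 1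
      have h1 : qStirling (Polynomial.X : Polynomial ℤ) 1 1
          = 1 + qnum Polynomial.X 1 * qStirling Polynomial.X 0 1 := rfl
      have h2 : qStirling (Polynomial.X : Polynomial ℤ) 0 1 = 0 := rfl
      rw [h1, h2, mul_zero, add_zero, mul_one]
      simp [qfact, qnum]
    | succ k' =>
      rw [if_neg (by omega), show 0 + 1 - (k' + 1) = 0 from by omega]
      show (0 : Polynomial ℤ) = qfact Polynomial.X 0 * qStirling Polynomial.X 1 0
      show (0 : Polynomial ℤ) = qfact Polynomial.X 0 * 0
      rw [mul_zero]
  | succ m IH =>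
    intro k
    rw [show m + 1 + 1 = (m + 1) + 1 from rfl, Hrec (by omega) k]
    cases k with
    | zero =>
      rw [IH 0]
      have hm : Hmfun (Polynomial.X : Polynomial ℤ) (m+1) 0 = 0 := rfl
      rw [hm, add_zero]
      simp only [Nat.sub_zero]
      have hst : qStirling (Polynomial.X : Polynomial ℤ) (m+2) (m+2)
          = qStirling Polynomial.X (m+1) (m+1)
            + qnum Polynomial.X (m+2) * qStirling Polynomial.X (m+1) (m+2) := rfl
      rw [show m + 1 + 1 = m + 2 from rfl, hst,
        qStirling_of_lt (Polynomial.X : Polynomial ℤ) (n := m+1) (k := m+2) (by omega), mul_zero,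
        add_zero]
      have hf : qfact (Polynomial.X : Polynomial ℤ) (m+2)
          = qfact Polynomial.X (m+1) * qnum Polynomial.X (m+2) := by
        rw [qfact, qfact, Finset.prod_range_succ]
      rw [hf]
      ring
    | succ k' =>
      have hm : Hmfun (Polynomial.X : Polynomial ℤ) (m+1) (k'+1)
          = Hfun Polynomial.X (m+1) k' := rfl
      rw [hm, IH (k'+1), IH k']
      by_cases hk : k' ≤ m
      · have e1 : m + 1 - (k' + 1) = m - k' := by omega
        have e2 : m + 1 - k' = (m - k') + 1 := by omega
        have e3 : m + 1 + 1 - (k' + 1) = (m - k') + 1 := by omega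
        rw [e1, e2, e3]
        set a := m - k' with ha
        have hst : qStirling (Polynomial.X : Polynomial ℤ) (m+2) (a+1)
            = qStirling Polynomial.X (m+1) a
              + qnum Polynomial.X (a+1) * qStirling Polynomial.X (m+1) (a+1) := rfl
        rw [show m + 1 + 1 = m + 2 from rfl, hst]
        have hf : qfact (Polynomial.X : Polynomial ℤ) (a+1)
            = qfact Polynomial.X a * qnum Polynomial.X (a+1) := by
          rw [qfact, qfact, Finset.prod_range_succ]
        rw [hf]
        ring
      · have e3 : m + 1 + 1 - (k' + 1) = 0 := by omega
        rw [e3]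
        have hq : qnum (Polynomial.X : Polynomial ℤ) 0 = 0 := by
          simp [qnum]
        rw [hq, zero_mul]
        have hst : qStirling (Polynomial.X : Polynomial ℤ) (m+1+1) 0 = 0 := rfl
        rw [hst, mul_zero]

section Transfer

variable {R : Type*} [CommRing R] (q : R)

theorem map_qnum (m : ℕ) :
    (Polynomial.eval₂RingHom (Int.castRingHom R) q) (qnum Polynomial.X m) = qnum q m := by
  rw [qnum, map_sum, qnum]
  refine Finset.sum_congr rfl fun i _ => ?_
  rw [map_pow, Polynomial.coe_eval₂RingHom, Polynomial.eval₂_X]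

theorem map_qfact (m : ℕ) :
    (Polynomial.eval₂RingHom (Int.castRingHom R) q) (qfact Polynomial.X m) = qfact q m := by
  rw [qfact, map_prod, qfact]
  exact Finset.prod_congr rfl fun i _ => map_qnum q (i+1)

theorem map_qStirling : ∀ (n k : ℕ),
    (Polynomial.eval₂RingHom (Int.castRingHom R) q) (qStirling Polynomial.X n k)
      = qStirling q n k := by
  intro n
  induction n with
  | zero =>
    intro k
    cases k with
    | zero => exact map_one _
    | succ k' => exact map_zero _
  | succ n IH =>
    intro k
    cases k with
    | zero => exact map_zero _
    | succ k' =>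
      show (Polynomial.eval₂RingHom (Int.castRingHom R) q)
        (qStirling Polynomial.X n k' + qnum Polynomial.X (k'+1)
          * qStirling Polynomial.X n (k'+1)) = _
      rw [map_add, map_mul, IH k', IH (k'+1), map_qnum]
      rfl

theorem map_Hfun (n k : ℕ) :
    (Polynomial.eval₂RingHom (Int.castRingHom R) q) (Hfun Polynomial.X n k)
      = Hfun q n k := by
  rw [Hfun, map_sum, Hfun]
  refine Finset.sum_congr rfl fun σ _ => ?_
  rw [Phi, map_sum, Phi]
  refine Finset.sum_congr rfl fun S _ => ?_
  rw [map_pow, Polynomial.coe_eval₂RingHom, Polynomial.eval₂_X]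

end Transfer

/-- For all n ≥ 1, 0 ≤ k ≤ n−1 and q in a commutative ring,
Σ_{(σ,S)∈𝔖^>_{n,k}} q^{maj((σ,S))} = [n−k]_q! · S_{n,n−k}(q). -/
theorem statement1 {R : Type*} [CommRing R] (q : R) (n k : ℕ) (hn : 1 ≤ n) (hk : k ≤ n - 1) :
    ∑ σ : Equiv.Perm (Fin n), ∑ S ∈ starSets (DesSet σ) k, q ^ starMaj σ S =
      qfact q (n - k) * qStirling q n (n - k) := by
  obtain ⟨m, rfl⟩ : ∃ m, n = m + 1 := ⟨n - 1, by omega⟩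
  have h := congrArg (Polynomial.eval₂RingHom (Int.castRingHom R) q) (HStir m k)
  rw [map_Hfun, map_mul, map_qfact, map_qStirling] at h
  exact h
end

section
/- Let K be a field, let q ∈ K be nonzero, and let z ∈ K. For all n ≥ 1, Σ_{σ∈𝔖_n} q^{inv(σ)} · Π_{j∈Des(σ)} (1 + z·q^{−(1 + inv^{□,j}(σ))}) = Σ_{k=1}^{n} [k]_q! · S_{n,k}(q) · z^{n−k}. -/
open Finset

/-!
Expanding the product over descents turns the left-hand side into the sum of `z ^ |S| q ^ inv(σ, S)`
over descent-starred permutations `(σ, S)`. We prove, by induction on `n`, that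
`∑_{(σ,S)} q ^ inv(σ, S) φ(|S|) = ∑_k [k]_q! S_{n,k}(q) φ(n - k)` for every `φ : ℕ → K`; the freedom
in `φ` is what lets the induction close.

Every `τ ∈ 𝔖_{n+1}` arises exactly once by inserting `n + 1` into some `σ ∈ 𝔖_n`, at a gap `p`.
This destroys the descent at `p`, shifts the later positions, adds `n - p` inversions, and creates a
new descent right after `n + 1` (when `p < n`), which may or may not be starred. For a fixed star
set `U` of `σ` (with `p ∉ U`) the weight is multiplied by `q` to the number of unstarred gaps after
`p`, so summing over `p` gives `[n + 1 - |U|]_q` without and `[n - |U|]_q` with the new star. The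
induction hypothesis applied to `j ↦ [n + 1 - j]_q φ(j) + [n - j]_q φ(j + 1)` then yields the
right-hand side through the recursion of `S_{n,k}(q)`.
-/

/-- Position `i` (1-indexed) of `σ` is position `shiftAbove p i` of `insertMax σ p`. -/
def shiftAbove (p : ℕ) : ℕ ↪ ℕ where
  toFun i := if i ≤ p then i else i + 1
  inj' a b h := by simp only at h; split_ifs at h <;> omega

lemma shiftAbove_apply (p i : ℕ) : shiftAbove p i = if i ≤ p then i else i + 1 := rfl

lemma shiftAbove_lt_shiftAbove_iff {p i j : ℕ} : shiftAbove p i < shiftAbove p j ↔ i < j := by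
  simp only [shiftAbove_apply]; split_ifs <;> omega

lemma shiftAbove_ne_succ (p i : ℕ) : shiftAbove p i ≠ p + 1 := by
  rw [shiftAbove_apply]; split_ifs <;> omega

lemma shiftAbove_succ {p i : ℕ} (hi : i ≠ p) : shiftAbove p i + 1 = shiftAbove p (i + 1) := by
  simp only [shiftAbove_apply]; split_ifs <;> omega

lemma exists_shiftAbove_eq {p x : ℕ} (hx : x ≠ p + 1) : ∃ i, shiftAbove p i = x :=
  ⟨if x ≤ p then x else x - 1, by simp only [shiftAbove_apply]; split_ifs <;> omega⟩

lemma succ_notMem_map_shiftAbove (p : ℕ) (s : Finset ℕ) : p + 1 ∉ s.map (shiftAbove p) := by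
  simpa using fun i _ => shiftAbove_ne_succ p i

lemma Icc_one_succ_eq_insert_map_shiftAbove {n p : ℕ} (hp : p ≤ n) :
    Icc 1 (n + 1) = insert (p + 1) ((Icc 1 n).map (shiftAbove p)) := by
  ext x
  simp only [mem_Icc, mem_insert, mem_map, shiftAbove_apply]
  constructor
  · intro hx
    by_cases hxp : x = p + 1
    · exact Or.inl hxp
    · refine Or.inr ⟨if x ≤ p then x else x - 1, ?_, ?_⟩ <;> split_ifs <;> omega
  · rintro (rfl | ⟨i, hi, rfl⟩) <;> [omega; split_ifs <;> omega]

lemma sum_powerset_map {α β M : Type*} [AddCommMonoid M] (f : α ↪ β) (s : Finset α)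
    (g : Finset β → M) :
    ∑ t ∈ (s.map f).powerset, g t = ∑ u ∈ s.powerset, g (u.map f) := by
  have : (s.map f).powerset = s.powerset.map ⟨map f, map_injective f⟩ := by
    ext t
    simp only [mem_powerset, mem_map, Function.Embedding.coeFn_mk, subset_map_iff]
    constructor
    · rintro ⟨u, hu, rfl⟩; exact ⟨u, hu, rfl⟩
    · rintro ⟨u, hu, rfl⟩; exact ⟨u, hu, rfl⟩
  rw [this, sum_map]
  rfl

section Insertion

variable {n : ℕ}

/-- Inserts the value `n + 1` into the one-line notation of `σ`; it lands at (1-indexed)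
position `p + 1`. -/
def insertMax (σ : Equiv.Perm (Fin n)) (p : Fin (n + 1)) : Equiv.Perm (Fin (n + 1)) :=
  ((finSuccEquiv' p).trans σ.optionCongr).trans finSuccEquivLast.symm

@[simp]
lemma insertMax_self (σ : Equiv.Perm (Fin n)) (p : Fin (n + 1)) :
    insertMax σ p p = Fin.last n := by
  simp [insertMax, finSuccEquiv'_at]

@[simp]
lemma insertMax_succAbove (σ : Equiv.Perm (Fin n)) (p : Fin (n + 1)) (i : Fin n) :
    insertMax σ p (p.succAbove i) = (σ i).castSucc := by
  simp [insertMax, finSuccEquiv'_succAbove]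

lemma insertMax_injective :
    Function.Injective fun x : Equiv.Perm (Fin n) × Fin (n + 1) => insertMax x.1 x.2 := by
  rintro ⟨σ, p⟩ ⟨σ', p'⟩ h
  simp only at h
  obtain rfl : p = p' := by
    apply (insertMax σ' p').injective
    rw [insertMax_self, ← h, insertMax_self]
  obtain rfl : σ = σ' := by
    ext i
    simpa using congrArg (fun τ : Equiv.Perm (Fin (n + 1)) => (τ (p.succAbove i) : ℕ)) h
  rfl

lemma insertMax_bijective :
    Function.Bijective fun x : Equiv.Perm (Fin n) × Fin (n + 1) => insertMax x.1 x.2 := by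
  refine (Fintype.bijective_iff_injective_and_card _).mpr ⟨insertMax_injective, ?_⟩
  simp [Fintype.card_perm, Nat.factorial_succ, mul_comm]

lemma Fin.val_succAbove (p : Fin (n + 1)) (j : Fin n) :
    (p.succAbove j : ℕ) = if (j : ℕ) < p then (j : ℕ) else (j : ℕ) + 1 := by
  rcases lt_or_ge (j : ℕ) p with h | h
  · rw [if_pos h, Fin.succAbove_of_castSucc_lt _ _ (Fin.lt_def.mpr h), Fin.val_castSucc]
  · rw [if_neg (by omega), Fin.succAbove_of_le_castSucc _ _ (Fin.le_def.mpr h), Fin.val_succ]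

lemma oneline_insertMax_shiftAbove (σ : Equiv.Perm (Fin n)) (p : Fin (n + 1)) (i : ℕ) :
    oneline (insertMax σ p) (shiftAbove p i) = oneline σ i := by
  have hp := p.isLt
  unfold oneline
  by_cases hi : 1 ≤ i ∧ i ≤ n
  · rw [dif_pos hi, dif_pos (by rw [shiftAbove_apply]; split_ifs <;> omega)]
    have hpos : (⟨shiftAbove p i - 1, by rw [shiftAbove_apply]; split_ifs <;> omega⟩ : Fin (n + 1))
        = p.succAbove ⟨i - 1, by omega⟩ :=
      Fin.ext (by simp only [Fin.val_succAbove, shiftAbove_apply]; split_ifs <;> omega)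
    rw [hpos, insertMax_succAbove, Fin.val_castSucc]
  · rw [dif_neg hi, dif_neg (by rw [shiftAbove_apply]; split_ifs <;> omega)]

lemma oneline_insertMax_succ (σ : Equiv.Perm (Fin n)) (p : Fin (n + 1)) :
    oneline (insertMax σ p) (p + 1) = n + 1 := by
  unfold oneline
  rw [dif_pos (by omega)]
  simp

end Insertion

section Statistics

variable {n : ℕ}

lemma oneline_le (σ : Equiv.Perm (Fin n)) (i : ℕ) : oneline σ i ≤ n := by
  unfold oneline
  split_ifs with h
  · have := (σ ⟨i - 1, by omega⟩).isLt; omega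
  · omega

lemma invEnd_insertMax_shiftAbove (σ : Equiv.Perm (Fin n)) (p : Fin (n + 1)) (i : ℕ) :
    invEnd (insertMax σ p) (shiftAbove p i) = invEnd σ i + if (p : ℕ) < i then 1 else 0 := by
  have hmax : oneline σ i < n + 1 := Nat.lt_succ_of_le (oneline_le σ i)
  unfold invEnd
  rw [Icc_one_succ_eq_insert_map_shiftAbove p.is_le, filter_insert, filter_map]
  simp only [Function.comp_def, oneline_insertMax_shiftAbove, oneline_insertMax_succ,
    shiftAbove_lt_shiftAbove_iff]
  by_cases hpi : (p : ℕ) < i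
  · have hlt : (p : ℕ) + 1 < shiftAbove p i := by rw [shiftAbove_apply, if_neg (by omega)]; omega
    rw [if_pos ⟨hlt, hmax⟩, if_pos hpi, card_insert_of_notMem (succ_notMem_map_shiftAbove _ _),
      card_map]
  · have hge : ¬ (p : ℕ) + 1 < shiftAbove p i := by rw [shiftAbove_apply, if_pos (by omega)]; omega
    rw [if_neg (fun h => hge h.1), if_neg hpi, add_zero, card_map]

lemma invEnd_insertMax_succ (σ : Equiv.Perm (Fin n)) (p : Fin (n + 1)) :
    invEnd (insertMax σ p) (p + 1) = 0 := by
  rw [invEnd, card_eq_zero, filter_eq_empty_iff, oneline_insertMax_succ]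
  exact fun x _ h => absurd h.2 (not_lt.mpr (oneline_le _ x))

lemma invNum_eq_sum_invEnd (σ : Equiv.Perm (Fin n)) : invNum σ = ∑ j ∈ Icc 1 n, invEnd σ j := by
  unfold invNum invEnd
  rw [card_filter, sum_product, sum_comm]
  simp only [card_filter]

lemma invNum_insertMax (σ : Equiv.Perm (Fin n)) (p : Fin (n + 1)) :
    invNum (insertMax σ p) = invNum σ + (n - p) := by
  have hcount : ((Icc 1 n).filter fun i => (p : ℕ) < i) = Ioc (p : ℕ) n := by
    ext i; simp only [mem_filter, mem_Icc, mem_Ioc]; omega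
  rw [invNum_eq_sum_invEnd, Icc_one_succ_eq_insert_map_shiftAbove p.is_le,
    sum_insert (succ_notMem_map_shiftAbove _ _), invEnd_insertMax_succ, zero_add, sum_map,
    sum_congr rfl fun i _ => invEnd_insertMax_shiftAbove σ p i, sum_add_distrib,
    ← invNum_eq_sum_invEnd, sum_boole, hcount, Nat.card_Ioc, Nat.cast_id]

lemma desSet_subset_range (σ : Equiv.Perm (Fin n)) : DesSet σ ⊆ range n := fun x hx => by
  simp only [DesSet, mem_filter, mem_Icc] at hx
  exact mem_range.mpr (by omega)

lemma desSet_insertMax (σ : Equiv.Perm (Fin n)) (p : Fin (n + 1)) :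
    DesSet (insertMax σ p) = ((DesSet σ).erase p).map (shiftAbove p) ∪
      if (p : ℕ) < n then {(p : ℕ) + 1} else ∅ := by
  have hp := p.is_le
  have hpeak : ∀ i, oneline (insertMax σ p) (shiftAbove p i) < oneline (insertMax σ p) (p + 1) := by
    intro i
    rw [oneline_insertMax_shiftAbove, oneline_insertMax_succ]
    exact Nat.lt_succ_of_le (oneline_le σ i)
  ext x
  simp only [DesSet, mem_union, mem_map, mem_erase, mem_filter, mem_Icc, Nat.add_sub_cancel]
  constructor
  · rintro ⟨hx, hdes⟩
    by_cases hxp : x = p + 1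
    · right; rw [if_pos (by omega)]; exact mem_singleton.mpr hxp
    obtain ⟨i, rfl⟩ := exists_shiftAbove_eq hxp
    by_cases hip : i = (p : ℕ)
    · subst hip
      have hself : shiftAbove p p + 1 = p + 1 := by rw [shiftAbove_apply, if_pos le_rfl]
      rw [hself] at hdes
      exact absurd hdes (lt_asymm (hpeak p))
    · left
      refine ⟨i, ⟨hip, ?_, ?_⟩, rfl⟩
      · rw [shiftAbove_apply] at hx; split_ifs at hx <;> omega
      · rwa [shiftAbove_succ hip, oneline_insertMax_shiftAbove, oneline_insertMax_shiftAbove]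
          at hdes
  · rintro (⟨i, ⟨hip, hi, hdes⟩, rfl⟩ | hx)
    · refine ⟨by rw [shiftAbove_apply]; split_ifs <;> omega, ?_⟩
      rwa [shiftAbove_succ hip, oneline_insertMax_shiftAbove, oneline_insertMax_shiftAbove]
    · split_ifs at hx with hpn
      · obtain rfl := mem_singleton.mp hx
        have hnext : (p : ℕ) + 1 + 1 = shiftAbove p (p + 1) := by
          rw [shiftAbove_apply, if_neg (by omega)]
        exact ⟨by omega, hnext ▸ hpeak _⟩
      · exact absurd hx (notMem_empty _)

end Statistics

section QAnalogues

variable {R : Type*} [CommRing R] (q : R)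

lemma qnum_succ (m : ℕ) : qnum q (m + 1) = 1 + q * qnum q m := by
  simp only [qnum, sum_range_succ', pow_zero, mul_sum, pow_succ', add_comm]

lemma qfact_succ (m : ℕ) : qfact q (m + 1) = qfact q m * qnum q (m + 1) :=
  prod_range_succ _ _

/-- The ranks of the elements of `T`, counted from the top, are `0, …, #T - 1`. -/
lemma sum_pow_card_filter_lt {α : Type*} [LinearOrder α] (T : Finset α) :
    ∑ p ∈ T, q ^ #(T.filter (p < ·)) = qnum q #T := by
  induction T using Finset.induction_on_max with
  | empty => simp [qnum]
  | insert a s hlt ih =>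
    have ha : a ∉ s := fun h => lt_irrefl a (hlt a h)
    have htop : (insert a s).filter (a < ·) = ∅ :=
      filter_eq_empty_iff.mpr fun x hx => by
        rcases mem_insert.mp hx with rfl | hx
        exacts [lt_irrefl x, not_lt.mpr (hlt x hx).le]
    have hbelow : ∀ p ∈ s, #((insert a s).filter (p < ·)) = #(s.filter (p < ·)) + 1 := by
      intro p hp
      rw [filter_insert, if_pos (hlt p hp), card_insert_of_notMem (fun h => ha (mem_filter.mp h).1)]
    rw [sum_insert ha, htop, card_empty, pow_zero, sum_congr rfl fun p hp => by rw [hbelow p hp],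
      card_insert_of_notMem ha, qnum_succ, ← ih, mul_sum]
    simp only [pow_succ']

lemma qStirling_eq_zero_of_lt {n k : ℕ} (h : n < k) : qStirling q n k = 0 := by
  induction n generalizing k with
  | zero => obtain ⟨k, rfl⟩ := Nat.exists_eq_add_one_of_ne_zero (by omega : k ≠ 0); rfl
  | succ m ih =>
    obtain ⟨k, rfl⟩ := Nat.exists_eq_add_one_of_ne_zero (by omega : k ≠ 0)
    simp only [qStirling, ih (by omega : m < k), ih (by omega : m < k + 1), mul_zero, add_zero]

lemma sum_qStirling_succ (φ : ℕ → R) (n : ℕ) :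
    ∑ k ∈ range (n + 2), qfact q k * qStirling q (n + 1) k * φ (n + 1 - k) =
      ∑ k ∈ range (n + 1), qfact q k * qStirling q n k *
        (qnum q (k + 1) * φ (n - k) + qnum q k * φ (n + 1 - k)) := by
  set g : ℕ → R := fun k => qfact q k * qnum q k * qStirling q n k * φ (n + 1 - k)
  have hshift : ∑ k ∈ range (n + 1), g (k + 1) = ∑ k ∈ range (n + 1), g k := by
    have h := sum_range_succ' g (n + 1)
    rw [sum_range_succ,
      show g (n + 1) = 0 by simp [g, qStirling_eq_zero_of_lt q (Nat.lt_succ_self n)],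
      show g 0 = 0 by simp [g, qnum]] at h
    simpa using h.symm
  have hterm : ∀ k, qfact q (k + 1) * qStirling q (n + 1) (k + 1) * φ (n + 1 - (k + 1)) =
      qfact q k * qStirling q n k * qnum q (k + 1) * φ (n - k) + g (k + 1) := by
    intro k
    simp only [g, qfact_succ, qStirling, Nat.add_sub_add_right]
    ring
  rw [sum_range_succ', sum_congr rfl fun k _ => hterm k, sum_add_distrib, hshift, ← sum_add_distrib]
  simp only [g, qStirling, mul_zero, zero_mul, add_zero]
  exact sum_congr rfl fun k _ => by ring

end QAnalogues

section StarWeight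

variable {K : Type*} [Field K] {q : K} {n : ℕ}

/-- `q ^ inv(σ, S)` for the descent-starred permutation `(σ, S)` (see `starInv`), written with
inverse powers so that no truncated subtraction occurs. -/
def starWeight (q : K) (σ : Equiv.Perm (Fin n)) (S : Finset ℕ) : K :=
  q ^ invNum σ * ∏ i ∈ S, (q ^ (1 + invEnd σ i))⁻¹

lemma starWeight_insertMax_map (hq : q ≠ 0) (σ : Equiv.Perm (Fin n)) (p : Fin (n + 1))
    {U : Finset ℕ} (hU : U ⊆ range (n + 1)) :
    starWeight q (insertMax σ p) (U.map (shiftAbove p)) =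
      starWeight q σ U * q ^ #((range (n + 1) \ U).filter ((p : ℕ) < ·)) := by
  set c := #((range (n + 1) \ U).filter ((p : ℕ) < ·))
  set d := #(U.filter ((p : ℕ) < ·))
  have hcount : n - p = c + d := by
    have hIoc : (range (n + 1)).filter ((p : ℕ) < ·) = Ioc (p : ℕ) n := by
      ext x; simp only [mem_filter, mem_range, mem_Ioc]; omega
    rw [← card_union_of_disjoint (disjoint_filter_filter sdiff_disjoint), ← filter_union,
      sdiff_union_of_subset hU, hIoc, Nat.card_Ioc]
  have hshifted : ∏ i ∈ U, (q ^ (1 + invEnd (insertMax σ p) (shiftAbove p i)))⁻¹ =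
      (∏ i ∈ U, (q ^ (1 + invEnd σ i))⁻¹) * (q ^ d)⁻¹ := by
    simp only [invEnd_insertMax_shiftAbove, ← add_assoc, pow_add, mul_inv, prod_mul_distrib,
      prod_inv_distrib, prod_pow_eq_pow_sum, sum_boole, Nat.cast_id, d]
  unfold starWeight
  rw [prod_map, hshifted, invNum_insertMax, hcount]
  field_simp
  ring

lemma starWeight_insertMax_insert_succ (σ : Equiv.Perm (Fin n)) (p : Fin (n + 1))
    {S : Finset ℕ} (hS : (p : ℕ) + 1 ∉ S) :
    starWeight q (insertMax σ p) (insert ((p : ℕ) + 1) S) =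
      starWeight q (insertMax σ p) S * q⁻¹ := by
  rw [starWeight, prod_insert hS, invEnd_insertMax_succ, add_zero, pow_one, starWeight]
  ring

lemma sum_starWeight_insertMax (hq : q ≠ 0) (σ : Equiv.Perm (Fin n)) (p : Fin (n + 1))
    (φ : ℕ → K) :
    ∑ S ∈ (DesSet (insertMax σ p)).powerset, starWeight q (insertMax σ p) S * φ #S =
      ∑ U ∈ ((DesSet σ).erase p).powerset, starWeight q σ U *
        (q ^ #((range (n + 1) \ U).filter ((p : ℕ) < ·)) * φ #U +
          if (p : ℕ) < n then q ^ #((range n \ U).filter ((p : ℕ) < ·)) * φ (#U + 1) else 0) := by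
  have hsub : ∀ U ∈ ((DesSet σ).erase p).powerset, U ⊆ range n := fun U hU =>
    (mem_powerset.mp hU).trans ((erase_subset _ _).trans (desSet_subset_range σ))
  rw [desSet_insertMax]
  split_ifs with hpn
  · rw [union_singleton, sum_powerset_insert (succ_notMem_map_shiftAbove _ _), sum_powerset_map,
      sum_powerset_map, ← sum_add_distrib]
    refine sum_congr rfl fun U hU => ?_
    have hn : n ∉ U := fun h => by simpa using hsub U hU h
    have hlast : (range (n + 1) \ U).filter ((p : ℕ) < ·) =
        insert n ((range n \ U).filter ((p : ℕ) < ·)) := by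
      ext x; simp only [mem_filter, mem_sdiff, mem_range, mem_insert]
      constructor
      · rintro ⟨⟨hx, hxU⟩, hpx⟩
        by_cases hxn : x = n
        · exact Or.inl hxn
        · exact Or.inr ⟨⟨by omega, hxU⟩, hpx⟩
      · rintro (rfl | ⟨⟨hx, hxU⟩, hpx⟩)
        · exact ⟨⟨by omega, hn⟩, hpn⟩
        · exact ⟨⟨by omega, hxU⟩, hpx⟩
    rw [starWeight_insertMax_insert_succ σ p (succ_notMem_map_shiftAbove _ _),
      starWeight_insertMax_map hq σ p ((hsub U hU).trans (range_subset_range.mpr n.le_succ)),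
      card_insert_of_notMem (succ_notMem_map_shiftAbove _ _), card_map, hlast,
      card_insert_of_notMem (by simp), pow_succ]
    field_simp
  · rw [union_empty, sum_powerset_map]
    refine sum_congr rfl fun U hU => ?_
    rw [starWeight_insertMax_map hq σ p ((hsub U hU).trans (range_subset_range.mpr n.le_succ)),
      card_map, add_zero, mul_assoc]

lemma sum_sum_starWeight_insertMax (hq : q ≠ 0) (σ : Equiv.Perm (Fin n)) (φ : ℕ → K) :
    ∑ p : Fin (n + 1), ∑ S ∈ (DesSet (insertMax σ p)).powerset,
        starWeight q (insertMax σ p) S * φ #S =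
      ∑ U ∈ (DesSet σ).powerset, starWeight q σ U *
        (qnum q (n + 1 - #U) * φ #U + qnum q (n - #U) * φ (#U + 1)) := by
  simp_rw [sum_starWeight_insertMax hq σ _ φ]
  rw [Fin.sum_univ_eq_sum_range (fun p => ∑ U ∈ ((DesSet σ).erase p).powerset, starWeight q σ U *
      (q ^ #((range (n + 1) \ U).filter (p < ·)) * φ #U +
        if p < n then q ^ #((range n \ U).filter (p < ·)) * φ (#U + 1) else 0)),
    sum_comm' (t' := (DesSet σ).powerset) (s' := fun U => range (n + 1) \ U)
      (fun p U => by simp only [mem_powerset, subset_erase, mem_sdiff]; tauto)]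
  refine sum_congr rfl fun U hU => ?_
  have hUn : U ⊆ range n := (mem_powerset.mp hU).trans (desSet_subset_range σ)
  have hfilter : (range (n + 1) \ U).filter (· < n) = range n \ U := by
    ext x
    simp only [mem_filter, mem_sdiff, mem_range]
    exact ⟨fun ⟨⟨_, hxU⟩, hx⟩ => ⟨hx, hxU⟩, fun ⟨hx, hxU⟩ => ⟨⟨by omega, hxU⟩, hx⟩⟩
  rw [← mul_sum, sum_add_distrib, ← sum_mul, ← sum_filter, hfilter, ← sum_mul,
    sum_pow_card_filter_lt, sum_pow_card_filter_lt,
    card_sdiff_of_subset (hUn.trans (range_subset_range.mpr n.le_succ)), card_sdiff_of_subset hUn,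
    card_range, card_range]

end StarWeight

theorem sum_starWeight_mul {K : Type*} [Field K] {q : K} (hq : q ≠ 0) (n : ℕ) (φ : ℕ → K) :
    ∑ σ : Equiv.Perm (Fin n), ∑ S ∈ (DesSet σ).powerset, starWeight q σ S * φ #S =
      ∑ k ∈ range (n + 1), qfact q k * qStirling q n k * φ (n - k) := by
  induction n generalizing φ with
  | zero => simp [starWeight, DesSet, invNum, qfact, qStirling]
  | succ n ih =>
    rw [← insertMax_bijective.sum_comp, Fintype.sum_prod_type]
    simp_rw [sum_sum_starWeight_insertMax hq]
    rw [ih fun j => qnum q (n + 1 - j) * φ j + qnum q (n - j) * φ (j + 1), sum_qStirling_succ]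
    refine sum_congr rfl fun k hk => ?_
    have hk : k ≤ n := Nat.lt_succ_iff.mp (mem_range.mp hk)
    rw [show n + 1 - (n - k) = k + 1 by omega, show n - (n - k) = k by omega,
      show n - k + 1 = n + 1 - k by omega]

/-- For a field K, q ≠ 0, z ∈ K and n ≥ 1,
Σ_{σ∈𝔖_n} q^{inv(σ)} Π_{j∈Des(σ)} (1 + z q^{−(1+inv^{□,j}(σ))}) = Σ_{k=1}^n [k]_q! S_{n,k}(q) z^{n−k}. -/
theorem statement2 {K : Type*} [Field K] (q z : K) (hq : q ≠ 0) (n : ℕ) (hn : 1 ≤ n) :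
    ∑ σ : Equiv.Perm (Fin n),
        q ^ invNum σ * ∏ j ∈ DesSet σ, (1 + z * (q ^ (1 + invEnd σ j))⁻¹) =
      ∑ k ∈ Finset.Icc 1 n, qfact q k * qStirling q n k * z ^ (n - k) := by
  have hexpand : ∀ σ : Equiv.Perm (Fin n),
      q ^ invNum σ * ∏ j ∈ DesSet σ, (1 + z * (q ^ (1 + invEnd σ j))⁻¹) =
        ∑ S ∈ (DesSet σ).powerset, starWeight q σ S * z ^ #S := fun σ => by
    rw [prod_one_add, mul_sum]
    refine sum_congr rfl fun S _ => ?_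
    rw [prod_mul_distrib, prod_const, starWeight]
    ring
  have hzero : qStirling q n 0 = 0 := by
    obtain ⟨m, rfl⟩ := Nat.exists_eq_add_one_of_ne_zero (by omega : n ≠ 0); rfl
  rw [sum_congr rfl fun σ _ => hexpand σ, sum_starWeight_mul hq n]
  refine (sum_subset (fun k hk => ?_) fun k hk hk' => ?_).symm
  · simp only [mem_Icc, mem_range] at hk ⊢; omega
  · obtain rfl : k = 0 := by simp only [mem_Icc, mem_range] at hk hk'; omega
    rw [hzero, mul_zero, zero_mul]
end
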